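/- Fix an integer N ≥ 1, pairwise distinct complex numbers u_1, …, u_N, an index m ∈ {1,…,N}, a complex number y ∉ {u_1,…,u_N}, and an integer r ≥ 0. Then ∑_{k ≠ m} 1 / ((u_k − y)^{r+1}·(u_k − u_m)·∏_{β ≠ k}(u_k − u_β)) = (∑_{β ≠ m} 1/(u_m − u_β)) / ((u_m − y)^{r+1}·∏_{k ≠ m}(u_m − u_k)) + (r+1) / ((u_m − y)^{r+2}·∏_{k ≠ m}(u_m − u_k)) + (1/r!)·(d^r/dy^r)[ 1/((u_m − y)·∏_{k=1}^{N}(y − u_k)) ]. -/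

import Mathlib

/-!
Expand `f(w) = 1 / ((u_m - w) ∏_k (w - u_k))` in partial fractions. Lagrange's expansion
`1 / ∏_k (w - u_k) = ∑_k w_k / (w - u_k)`, with the nodal weights `w_k = 1 / ∏_{β ≠ k} (u_k - u_β)`,
together with `1 / ((u_m - w)(w - u_k)) = (1 / (u_m - w) + 1 / (w - u_k)) / (u_m - u_k)` for `k ≠ m`,
writes `f` as a combination of `1 / (u_k - w)`, `1 / (u_m - w)` and `1 / (u_m - w)^2`. The
coefficient of `1 / (u_m - w)` is `∑_{k ≠ m} w_k / (u_m - u_k)`, which is evaluated by differentiating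
the expansion of `1 / ∏_{k ≠ m} (w - u_k)` at `w = u_m`. The `r`-th derivatives of the three kinds of
terms are explicit, which gives the identity.
-/

open Finset Lagrange Polynomial Filter Topology Nat

section PartialFractions

variable {F ι : Type*} [Field F] [DecidableEq ι] {s : Finset ι} {v : ι → F}

theorem inv_prod_sub_eq_sum_nodalWeight_mul_inv {x : F} (hvs : Set.InjOn v s)
    (hs : s.Nonempty) (hx : ∀ i ∈ s, x ≠ v i) :
    (∏ i ∈ s, (x - v i))⁻¹ = ∑ i ∈ s, nodalWeight s v i * (x - v i)⁻¹ := by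
  refine inv_eq_of_mul_eq_one_right ?_
  have h := eval_interpolate_not_at_node (1 : ι → F) hx
  rw [interpolate_one hvs hs, eval_one, eval_nodal] at h
  simpa using h.symm

theorem nodalWeight_eq_inv_sub_mul_nodalWeight_erase {i j : ι} (hj : j ∈ s) (hij : i ≠ j) :
    nodalWeight s v i = (v i - v j)⁻¹ * nodalWeight (s.erase j) v i := by
  rw [nodalWeight, nodalWeight, ← mul_prod_erase (s.erase i) _ (mem_erase.2 ⟨hij.symm, hj⟩),
    erase_right_comm]

end PartialFractions

section Calculus

variable {𝕜 ι : Type*} [NontriviallyNormedField 𝕜] [DecidableEq ι]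

theorem hasDerivAt_inv_prod_sub {s : Finset ι} {v : ι → 𝕜} (a : 𝕜) (ha : ∀ i ∈ s, a ≠ v i) :
    HasDerivAt (fun x => (∏ i ∈ s, (x - v i))⁻¹)
      (-((∑ i ∈ s, (a - v i)⁻¹) * (∏ i ∈ s, (a - v i))⁻¹)) a := by
  have hne : ∀ i ∈ s, a - v i ≠ 0 := fun i hi => sub_ne_zero.2 (ha i hi)
  have hprod : HasDerivAt (fun x => ∏ i ∈ s, (x - v i))
      (∑ i ∈ s, ∏ j ∈ s.erase i, (a - v j)) a := by
    simpa using HasDerivAt.fun_finsetProd (u := s) (f' := fun _ => (1 : 𝕜))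
      fun i _ => (hasDerivAt_id a).sub_const (v i)
  have hsum : ∑ i ∈ s, ∏ j ∈ s.erase i, (a - v j) =
      (∑ i ∈ s, (a - v i)⁻¹) * ∏ i ∈ s, (a - v i) := by
    rw [sum_mul]
    refine sum_congr rfl fun i hi => ?_
    rw [← mul_prod_erase s _ hi, inv_mul_cancel_left₀ (hne i hi)]
  refine (hprod.inv (prod_ne_zero_iff.2 hne)).congr_deriv ?_
  rw [hsum, sq, neg_div, mul_div_mul_right _ _ (prod_ne_zero_iff.2 hne), div_eq_mul_inv]

theorem sum_nodalWeight_mul_inv_sq {s : Finset ι} {v : ι → 𝕜} (hvs : Set.InjOn v s) {a : 𝕜}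
    (ha : ∀ i ∈ s, a ≠ v i) :
    ∑ i ∈ s, nodalWeight s v i * ((a - v i) ^ 2)⁻¹ =
      (∑ i ∈ s, (a - v i)⁻¹) * (∏ i ∈ s, (a - v i))⁻¹ := by
  rcases s.eq_empty_or_nonempty with rfl | hs
  · simp
  have hopen : IsOpen {x | ∀ i ∈ s, x ≠ v i} := by
    convert (s.finite_toSet.image v).isClosed.isOpen_compl using 1
    ext x; simp [eq_comm]
  have hexpand : (fun x => (∏ i ∈ s, (x - v i))⁻¹) =ᶠ[𝓝 a]
      fun x => ∑ i ∈ s, nodalWeight s v i * (x - v i)⁻¹ :=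
    eventually_of_mem (hopen.mem_nhds ha) fun x hx =>
      inv_prod_sub_eq_sum_nodalWeight_mul_inv hvs hs hx
  have hsum : HasDerivAt (fun x => ∑ i ∈ s, nodalWeight s v i * (x - v i)⁻¹)
      (-∑ i ∈ s, nodalWeight s v i * ((a - v i) ^ 2)⁻¹) a := by
    rw [← sum_neg_distrib]
    refine HasDerivAt.fun_sum fun i hi => ?_
    simpa [div_eq_mul_inv] using (((hasDerivAt_id a).sub_const (v i)).inv
      (sub_ne_zero.2 (ha i hi))).const_mul (nodalWeight s v i)
  exact neg_injective ((hsum.congr_of_eventuallyEq hexpand).unique (hasDerivAt_inv_prod_sub a ha))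

theorem iteratedDeriv_inv_const_sub (a : 𝕜) (r : ℕ) :
    iteratedDeriv r (fun x => (a - x)⁻¹) = fun x => r ! * ((a - x) ^ (r + 1))⁻¹ := by
  have h := iter_deriv_inv_linear r (-1 : 𝕜) a
  simp only [neg_one_mul, neg_add_eq_sub] at h
  rw [iteratedDeriv_eq_iterate, h]
  funext x
  have hsign : ((-1 : 𝕜) ^ r) * (-1) ^ r = 1 := by rw [← mul_pow]; norm_num
  rw [show (-1 - r : ℤ) = -((r + 1 : ℕ) : ℤ) by push_cast; ring, zpow_neg, zpow_natCast]
  linear_combination (r ! * ((a - x) ^ (r + 1))⁻¹ : 𝕜) * hsign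

theorem iteratedDeriv_inv_sq_const_sub (a : 𝕜) (r : ℕ) :
    iteratedDeriv r (fun x => ((a - x) ^ 2)⁻¹) = fun x => (r + 1)! * ((a - x) ^ (r + 2))⁻¹ := by
  have h := iteratedDeriv_inv_const_sub a 1
  simp only [iteratedDeriv_one, factorial_one, cast_one, one_mul] at h
  rw [← h, ← iteratedDeriv_succ', iteratedDeriv_inv_const_sub]

section Nodes

variable [Fintype ι] {u : ι → 𝕜}

theorem sum_erase_nodalWeight_mul_inv_sub (hu : Function.Injective u) (m : ι) :
    ∑ k ∈ univ.erase m, nodalWeight univ u k * (u m - u k)⁻¹ =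
      -((∑ k ∈ univ.erase m, (u m - u k)⁻¹) * nodalWeight univ u m) := by
  have hne : ∀ k ∈ univ.erase m, u m ≠ u k := fun k hk h => ne_of_mem_erase hk (hu h).symm
  rw [nodalWeight, prod_inv_distrib, ← sum_nodalWeight_mul_inv_sq hu.injOn hne,
    ← sum_neg_distrib]
  refine sum_congr rfl fun k hk => ?_
  rw [nodalWeight_eq_inv_sub_mul_nodalWeight_erase (mem_univ m) (ne_of_mem_erase hk),
    ← neg_sub (u m), inv_neg, ← inv_pow]
  ring

theorem inv_sub_mul_prod_sub_eq (hu : Function.Injective u) (m : ι) {x : 𝕜}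
    (hx : ∀ k, x ≠ u k) :
    ((u m - x) * ∏ k, (x - u k))⁻¹ =
      ∑ k ∈ univ.erase m, nodalWeight univ u k * (u k - u m)⁻¹ * (u k - x)⁻¹ -
        (∑ k ∈ univ.erase m, (u m - u k)⁻¹) * nodalWeight univ u m * (u m - x)⁻¹ -
        nodalWeight univ u m * ((u m - x) ^ 2)⁻¹ := by
  have hsplit : ∀ k ∈ univ.erase m, (u m - x)⁻¹ * (nodalWeight univ u k * (x - u k)⁻¹) =
      nodalWeight univ u k * (u k - u m)⁻¹ * (u k - x)⁻¹ +
        nodalWeight univ u k * (u m - u k)⁻¹ * (u m - x)⁻¹ := by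
    intro k hk
    have hkm : u k ≠ u m := fun h => ne_of_mem_erase hk (hu h)
    have h1 : u m - x ≠ 0 := sub_ne_zero.2 (hx m).symm
    have h2 : x - u k ≠ 0 := sub_ne_zero.2 (hx k)
    have h3 : u k - x ≠ 0 := sub_ne_zero.2 (hx k).symm
    have h4 : u k - u m ≠ 0 := sub_ne_zero.2 hkm
    have h5 : u m - u k ≠ 0 := sub_ne_zero.2 hkm.symm
    field_simp
    ring
  rw [mul_inv, inv_prod_sub_eq_sum_nodalWeight_mul_inv hu.injOn ⟨m, mem_univ m⟩ fun k _ => hx k,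
    ← add_sum_erase _ _ (mem_univ m), mul_add, mul_sum, sum_congr rfl hsplit, sum_add_distrib,
    ← sum_mul, sum_erase_nodalWeight_mul_inv_sub hu, ← neg_sub (u m) x, inv_neg, ← inv_pow]
  ring

theorem iteratedDeriv_inv_sub_mul_prod_sub (hu : Function.Injective u) (m : ι) {y : 𝕜}
    (hy : ∀ k, y ≠ u k) (r : ℕ) :
    iteratedDeriv r (fun x => ((u m - x) * ∏ k, (x - u k))⁻¹) y =
      r ! * (∑ k ∈ univ.erase m, nodalWeight univ u k * (u k - u m)⁻¹ * ((u k - y) ^ (r + 1))⁻¹ -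
        (∑ k ∈ univ.erase m, (u m - u k)⁻¹) * nodalWeight univ u m * ((u m - y) ^ (r + 1))⁻¹ -
        (r + 1) * nodalWeight univ u m * ((u m - y) ^ (r + 2))⁻¹) := by
  have hopen : IsOpen {x | ∀ k, x ≠ u k} := by
    convert (Set.finite_range u).isClosed.isOpen_compl using 1
    ext x; simp [eq_comm]
  have hexpand := eventually_of_mem (hopen.mem_nhds hy) fun x hx => inv_sub_mul_prod_sub_eq hu m hx
  have hsmooth : ∀ k, ContDiffAt 𝕜 r (fun x => (u k - x)⁻¹) y :=
    fun k => (contDiffAt_const.sub contDiffAt_id).inv (sub_ne_zero.2 (hy k).symm)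
  have hsmooth_sq : ContDiffAt 𝕜 r (fun x => ((u m - x) ^ 2)⁻¹) y := by
    simpa only [inv_pow] using (hsmooth m).pow 2
  rw [EventuallyEq.iteratedDeriv_eq r hexpand, iteratedDeriv_fun_sub (by fun_prop) (by fun_prop),
    iteratedDeriv_fun_sub (by fun_prop) (by fun_prop), iteratedDeriv_fun_sum (by fun_prop)]
  simp only [iteratedDeriv_const_mul_field, iteratedDeriv_inv_const_sub,
    iteratedDeriv_inv_sq_const_sub]
  rw [mul_sub, mul_sub, mul_sum, factorial_succ]
  simp only [mul_left_comm _ (r ! : 𝕜)]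
  push_cast
  ring

end Nodes

end Calculus

theorem stmt13_general (N : ℕ) (u : Fin N → ℂ) (hu : Function.Injective u)
    (m : Fin N) (y : ℂ) (hy : ∀ k, y ≠ u k) (r : ℕ) :
    ∑ k ∈ univ.erase m,
        1 / ((u k - y) ^ (r + 1) * (u k - u m) * ∏ β ∈ univ.erase k, (u k - u β)) =
      (∑ β ∈ univ.erase m, 1 / (u m - u β)) /
          ((u m - y) ^ (r + 1) * ∏ k ∈ univ.erase m, (u m - u k)) +
        ((r : ℂ) + 1) / ((u m - y) ^ (r + 2) * ∏ k ∈ univ.erase m, (u m - u k)) +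
        (1 / (Nat.factorial r : ℂ)) *
          iteratedDeriv r (fun w => 1 / ((u m - w) * ∏ k : Fin N, (w - u k))) y := by
  have hterm : ∀ k, ((u k - y) ^ (r + 1) * (u k - u m) * ∏ β ∈ univ.erase k, (u k - u β))⁻¹ =
      nodalWeight univ u k * (u k - u m)⁻¹ * ((u k - y) ^ (r + 1))⁻¹ := by
    intro k
    rw [nodalWeight, prod_inv_distrib, mul_inv, mul_inv]
    ring
  have hfac : (r ! : ℂ) ≠ 0 := cast_ne_zero.2 (factorial_ne_zero r)
  simp only [one_div]
  rw [iteratedDeriv_inv_sub_mul_prod_sub hu m hy r, inv_mul_cancel_left₀ hfac,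
    sum_congr rfl fun k _ => hterm k, nodalWeight, prod_inv_distrib]
  simp only [div_eq_mul_inv, mul_inv]
  ring

theorem stmt13 (N : ℕ) (hN : 1 ≤ N) (u : Fin N → ℂ) (hu : Function.Injective u)
    (m : Fin N) (y : ℂ) (hy : ∀ k, y ≠ u k) (r : ℕ) :
    ∑ k ∈ univ.erase m,
        1 / ((u k - y) ^ (r + 1) * (u k - u m) * ∏ β ∈ univ.erase k, (u k - u β)) =
      (∑ β ∈ univ.erase m, 1 / (u m - u β)) /
          ((u m - y) ^ (r + 1) * ∏ k ∈ univ.erase m, (u m - u k)) +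
        ((r : ℂ) + 1) / ((u m - y) ^ (r + 2) * ∏ k ∈ univ.erase m, (u m - u k)) +
        (1 / (Nat.factorial r : ℂ)) *
          iteratedDeriv r (fun w => 1 / ((u m - w) * ∏ k : Fin N, (w - u k))) y :=
  stmt13_general N u hu m y hy r
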